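/- arXiv:1805.00897 — 2 statements merged into one kernel-verified Lean document; each statement's English description precedes it below -/
import Mathlib

section
/- Let Q be a symmetric positive semidefinite 3×3 real matrix such that ½(tr(Q) I₃ − Q) is positive definite, let b ∈ ℝ³, d > 0, and set 𝔸 := [Q + b bᵀ/d, b; bᵀ, d]. Define U(g) := ½ tr((I₄ − g) 𝔸 (I₄ − g)ᵀ). Then there exist constants α₁, α₂ > 0 such that for every g ∈ SE(3), α₁ ‖I₄ − g‖_F² ≤ U(g) ≤ α₂ ‖I₄ − g‖_F². -/
open Matrix BigOperators

noncomputable section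

abbrev V3 : Type := Fin 3 → ℝ
abbrev V4 : Type := (Fin 3 ⊕ Fin 1) → ℝ
abbrev V6 : Type := (Fin 3 → ℝ) × (Fin 3 → ℝ)
abbrev M3 : Type := Matrix (Fin 3) (Fin 3) ℝ
abbrev M4 : Type := Matrix (Fin 3 ⊕ Fin 1) (Fin 3 ⊕ Fin 1) ℝ

/-- cross product on ℝ³ -/
def cross (x y : V3) : V3 := crossProduct x y

/-- skew-symmetric matrix `x^×` with `x^× y = x × y` -/
def skew (x : V3) : M3 := !![0, -x 2, x 1; x 2, 0, -x 0; -x 1, x 0, 0]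

/-- rank-one matrix `x yᵀ` -/
def outer (x y : V3) : M3 := Matrix.vecMulVec x y

/-- `R` is a rotation matrix -/
def isRot (R : M3) : Prop := Rᵀ * R = 1 ∧ R.det = 1

def colV (p : V3) : Matrix (Fin 3) (Fin 1) ℝ := Matrix.of fun i _ => p i
def rowV (p : V3) : Matrix (Fin 1) (Fin 3) ℝ := Matrix.of fun _ j => p j

/-- homogeneous matrix `[R, p; 0, 1]` -/
def SE3mat (R : M3) (p : V3) : M4 := Matrix.fromBlocks R (colV p) 0 1

/-- membership in SE(3) -/
def inSE3 (g : M4) : Prop := ∃ R p, isRot R ∧ g = SE3mat R p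

/-- vector part of an element of ℝ⁴ -/
def vpart (r : V4) : V3 := fun i => r (Sum.inl i)
/-- scalar part of an element of ℝ⁴ -/
def spart (r : V4) : ℝ := r (Sum.inr 0)

/-- wedge product `b ∧ r := (b_v × r_v, b_s r_v − r_s b_v) ∈ ℝ⁶` -/
def wedge (b r : V4) : V6 :=
  (cross (vpart b) (vpart r), spart b • vpart r - spart r • vpart b)

/-- `ψ_a(A) := ½(a₃₂ − a₂₃, a₁₃ − a₃₁, a₂₁ − a₁₂)` -/
def psia (A : M3) : V3 :=
  ![(A 2 1 - A 1 2) / 2, (A 0 2 - A 2 0) / 2, (A 1 0 - A 0 1) / 2]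

/-- `ψ([A, b; c, d]) := (ψ_a(A), ½ b) ∈ ℝ⁶` -/
def psi (M : M4) : V6 :=
  (psia M.toBlocks₁₁, fun i => M (Sum.inl i) (Sum.inr 0) / 2)

/-- `ℙ([A, b; c, d]) := [(A − Aᵀ)/2, b; 0, 0]` -/
def Pproj (M : M4) : M4 :=
  Matrix.fromBlocks ((1 / 2 : ℝ) • (M.toBlocks₁₁ - M.toBlocks₁₁ᵀ)) M.toBlocks₁₂ 0 0

/-- `Ad*_g = [Rᵀ, −Rᵀ p^×; 0, Rᵀ]` acting on ℝ⁶, for `g = [R, p; 0, 1]` -/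
def AdStar (g : M4) (ξ : V6) : V6 :=
  ((g.toBlocks₁₁)ᵀ.mulVec (ξ.1 - cross (fun i => g (Sum.inl i) (Sum.inr 0)) ξ.2),
   (g.toBlocks₁₁)ᵀ.mulVec ξ.2)

/-- `(ω, v)^∧ := [ω^×, v; 0, 0]` -/
def hat (ξ : V6) : M4 := Matrix.fromBlocks (skew ξ.1) (colV ξ.2) 0 0

/-- squared Euclidean norm on ℝ³ -/
def sq3 (x : V3) : ℝ := ∑ i, x i ^ 2
/-- squared Euclidean norm on ℝ⁴ -/
def sq4 (x : V4) : ℝ := ∑ i, x i ^ 2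
/-- squared Euclidean norm on ℝ⁶ -/
def sq6 (ξ : V6) : ℝ := sq3 ξ.1 + sq3 ξ.2
/-- squared Frobenius norm of a 4×4 matrix -/
def frob4 (M : M4) : ℝ := ∑ i, ∑ j, M i j ^ 2
/-- squared Frobenius norm of a 3×3 matrix -/
def frob3 (M : M3) : ℝ := ∑ i, ∑ j, M i j ^ 2

/-- membership in `𝓜₀` (last row zero, block form `[M₁, m₂; 0, 0]`) -/
def inM0 (M : M4) : Prop := ∃ (M₁ : M3) (m₂ : V3), M = Matrix.fromBlocks M₁ (colV m₂) 0 0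

/-- `Δ_Q(u, v) := uᵀ((tr(Q) − 2 vᵀQv) I₃ − Q + 2 Q v vᵀ) u` -/
def DeltaQ (Q : M3) (u v : V3) : ℝ :=
  u ⬝ᵥ Matrix.mulVec
    ((Q.trace - 2 * (v ⬝ᵥ Q.mulVec v)) • (1 : M3) - Q + (2 : ℝ) • (Q * outer v v)) u

/-- angle-axis rotation `R_a(θ, u) = I₃ + sin θ · u^× + (1 − cos θ)(u^×)²` -/
def Ra (θ : ℝ) (u : V3) : M3 :=
  1 + Real.sin θ • skew u + (1 - Real.cos θ) • (skew u * skew u)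


/-!
Write `g = [R, p; 0, 1]` and `E = 1 - R`. Since `𝔸 = diag(Q, 0) + d⁻¹ w wᵀ` with `w = (b, d)`,
`2 U(g) = tr(E Q Eᵀ) + d⁻¹ ‖E b - d p‖²`. For a rotation, Cayley–Hamilton (with `adj R = Rᵀ`) shows
that `EᵀE = 2 - R - Rᵀ` is `‖E‖²/2` times the projector `1 - u uᵀ`, `u` the axis of `R`; hence
`tr(E Q Eᵀ) = ‖E‖² · uᵀ P u` with `P = ½(tr Q - Q)`, which lies between `λ_min(P) ‖E‖²` and
`(tr Q / 2) ‖E‖²`. The translational term is compared with `‖p‖²` through `‖E b‖ ≤ ‖E‖ ‖b‖`,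
trading part of it against the rotational term.
-/

section QuadraticForm

variable {n : Type*} [Fintype n]

theorem exists_pos_mul_dotProduct_self_le (P : Matrix n n ℝ)
    (hP : ∀ x : n → ℝ, x ≠ 0 → 0 < x ⬝ᵥ P *ᵥ x) :
    ∃ c : ℝ, 0 < c ∧ ∀ x : n → ℝ, c * (x ⬝ᵥ x) ≤ x ⬝ᵥ P *ᵥ x := by
  let f : EuclideanSpace ℝ n → ℝ := fun y => y.ofLp ⬝ᵥ P *ᵥ y.ofLp
  have hf : Continuous f := by
    simp only [f, dotProduct, mulVec]
    fun_prop
  obtain ⟨c, hc, hcf⟩ := (isCompact_sphere (0 : EuclideanSpace ℝ n) 1).exists_forall_le'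
    hf.continuousOn (a := 0) fun y hy => hP _ (by
      rintro h
      simp [(WithLp.ofLp_eq_zero 2).mp h] at hy)
  refine ⟨c, hc, fun x => ?_⟩
  rcases eq_or_ne x 0 with rfl | hx
  · simp
  let y := WithLp.toLp 2 x
  have hy : ‖y‖ ≠ 0 := by simpa [y] using hx
  have hxx : x ⬝ᵥ x = ‖y‖ ^ 2 := by
    rw [← real_inner_self_eq_norm_sq, EuclideanSpace.inner_eq_star_dotProduct]
    simp [y]
  have := hcf (‖y‖⁻¹ • y) (by simp [norm_smul, hy])
  simp only [f, WithLp.ofLp_smul, mulVec_smul, smul_dotProduct, dotProduct_smul, smul_eq_mul]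
    at this
  rw [hxx]
  field_simp at this
  simpa [y] using this

theorem trace_mul_mul_transpose (P F : Matrix n n ℝ) :
    (P * (F * Fᵀ)).trace = ∑ j, (fun i => F i j) ⬝ᵥ P *ᵥ fun i => F i j := by
  rw [← mul_assoc, trace_mul_comm, ← mul_assoc]
  simp only [trace, diag, mul_apply, transpose_apply, dotProduct, mulVec, Finset.sum_mul,
    Finset.mul_sum]
  refine Finset.sum_congr rfl fun j _ => Finset.sum_comm.trans ?_
  exact Finset.sum_congr rfl fun _ _ => Finset.sum_congr rfl fun _ _ => by ring

theorem mul_trace_le_trace_mul_of_isIdempotent [DecidableEq n] {P G : Matrix n n ℝ} {c : ℝ}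
    (hP : ∀ x : n → ℝ, c * (x ⬝ᵥ x) ≤ x ⬝ᵥ P *ᵥ x) (hGt : Gᵀ = G) (hGG : IsIdempotentElem G) :
    c * G.trace ≤ (P * G).trace := by
  have hG : G = G * Gᵀ := by rw [hGt, hGG.eq]
  rw [hG, ← one_mul (G * Gᵀ), trace_mul_mul_transpose, one_mul, trace_mul_mul_transpose,
    Finset.mul_sum]
  gcongr with j
  simpa using hP _

end QuadraticForm

theorem frob3_nonneg (M : M3) : 0 ≤ frob3 M := by unfold frob3; positivity

theorem frob3_eq_trace_transpose_mul_self (M : M3) : frob3 M = (Mᵀ * M).trace := by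
  simp only [frob3, trace, diag, mul_apply, transpose_apply, sq]
  exact Finset.sum_comm

namespace isRot

variable {R : M3}

theorem adjugate_eq (hR : isRot R) : R.adjugate = Rᵀ := by
  calc R.adjugate = R.adjugate * R * Rᵀ := by rw [mul_assoc, mul_eq_one_comm.mp hR.1, mul_one]
    _ = Rᵀ := by rw [adjugate_mul, hR.2, one_smul, one_mul]

theorem mul_self (hR : isRot R) : R * R = R.trace • R - R.trace • (1 : M3) + Rᵀ := by
  have hcof := hR.adjugate_eq
  rw [← Matrix.ext_iff] at hcof
  simp only [adjugate_fin_three, of_apply, cons_val', cons_val_fin_one, transpose_apply,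
    Fin.forall_fin_succ, cons_val_zero, cons_val_succ, Fin.succ_zero_eq_one, Fin.succ_one_eq_two,
    IsEmpty.forall_iff, and_true] at hcof
  ext i j
  fin_cases i <;> fin_cases j <;>
    simp [mul_apply, Fin.sum_univ_three, trace_fin_three, one_apply] <;>
    linarith

theorem transpose_one_sub_mul_one_sub (hR : isRot R) :
    (1 - R)ᵀ * (1 - R) = (2 : ℝ) • (1 : M3) - R - Rᵀ := by
  rw [transpose_sub, transpose_one, sub_mul, mul_sub, mul_sub, one_mul, one_mul, mul_one, hR.1]
  module

theorem gram_mul_self (hR : isRot R) :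
    (1 - R)ᵀ * (1 - R) * ((1 - R)ᵀ * (1 - R)) =
      (frob3 (1 - R) / 2) • ((1 - R)ᵀ * (1 - R)) := by
  have hRt : Rᵀ * Rᵀ = R.trace • Rᵀ - R.trace • (1 : M3) + R := by
    simpa using congrArg transpose hR.mul_self
  rw [frob3_eq_trace_transpose_mul_self, hR.transpose_one_sub_mul_one_sub]
  simp only [trace_sub, trace_smul, trace_one, trace_transpose, sub_mul, mul_sub, Matrix.smul_mul,
    Matrix.mul_smul, one_mul, mul_one, hR.mul_self, hRt, hR.1, mul_eq_one_comm.mp hR.1]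
  simp only [Fintype.card_fin, Nat.cast_ofNat, smul_eq_mul]
  module

theorem trace_conj_one_sub_bounds {Q : M3} {c : ℝ} (hQ : ∀ x : V3, 0 ≤ x ⬝ᵥ Q *ᵥ x)
    (hc : ∀ x : V3, c * (x ⬝ᵥ x) ≤ x ⬝ᵥ ((1 / 2 : ℝ) • (Q.trace • (1 : M3) - Q)) *ᵥ x)
    (hR : isRot R) :
    c * frob3 (1 - R) ≤ ((1 - R) * Q * (1 - R)ᵀ).trace ∧
      ((1 - R) * Q * (1 - R)ᵀ).trace ≤ Q.trace / 2 * frob3 (1 - R) := by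
  have htC := frob3_eq_trace_transpose_mul_self (1 - R)
  have hCC := hR.gram_mul_self
  rw [trace_mul_cycle, trace_mul_comm]
  set t := frob3 (1 - R)
  rcases eq_or_ne t 0 with h0 | h0
  · have hE : 1 - R = 0 := by
      rwa [h0, eq_comm, ← conjTranspose_eq_transpose_of_trivial,
        trace_conjTranspose_mul_self_eq_zero_iff] at htC
    simp [h0, hE]
  set C := (1 - R)ᵀ * (1 - R)
  -- `G` is the projector `u uᵀ` onto the axis `u` of `R`
  set G : M3 := 1 - (2 / t) • C
  have hGt : Gᵀ = G := by simp [G, C]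
  have hGG : IsIdempotentElem G := by
    rw [IsIdempotentElem]
    simp only [G, sub_mul, mul_sub, one_mul, mul_one, Matrix.smul_mul, Matrix.mul_smul, hCC,
      smul_smul]
    match_scalars <;> field_simp
    ring
  have hCG : C = (t / 2) • (1 - G) := by
    simp only [G, sub_sub_cancel, smul_smul]
    rw [div_mul_div_comm, mul_comm t 2, div_self (by positivity), one_smul]
  have htrG : G.trace = 1 := by
    simp only [G, trace_sub, trace_one, trace_smul, ← htC, smul_eq_mul, Fintype.card_fin]
    field_simp
    norm_num
  have hQC : (Q * C).trace = t / 2 * (Q.trace - (Q * G).trace) := by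
    rw [hCG, Matrix.mul_smul, trace_smul, mul_sub, mul_one, trace_sub, smul_eq_mul]
  have hQG := mul_trace_le_trace_mul_of_isIdempotent (c := 0) (by simpa using hQ) hGt hGG
  have hPG := mul_trace_le_trace_mul_of_isIdempotent hc hGt hGG
  simp only [Matrix.smul_mul, trace_smul, sub_mul, trace_sub, one_mul, htrG, smul_eq_mul]
    at hQG hPG
  have ht0 : 0 ≤ t := frob3_nonneg _
  constructor <;> nlinarith

end isRot

theorem trace_mul_add_smul_vecMulVec_mul_transpose {m R : Type*} [Fintype m] [CommRing R]
    (X M : Matrix m m R) (c : R) (w : m → R) :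
    (X * (M + c • vecMulVec w w) * Xᵀ).trace = (X * M * Xᵀ).trace + c * (X *ᵥ w ⬝ᵥ X *ᵥ w) := by
  rw [mul_add, add_mul, trace_add, Matrix.mul_smul, Matrix.smul_mul, trace_smul, mul_vecMulVec,
    vecMulVec_mul, vecMul_transpose, trace_vecMulVec, smul_eq_mul]

theorem one_sub_SE3mat (R : M3) (p : V3) :
    1 - SE3mat R p = fromBlocks (1 - R) (colV (-p)) 0 0 := by
  rw [SE3mat, ← fromBlocks_one]
  ext (i | i) (j | j) <;> simp [colV, one_apply]

theorem frob4_fromBlocks (E : M3) (q : V3) :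
    frob4 (fromBlocks E (colV q) 0 0) = frob3 E + sq3 q := by
  simp [frob4, frob3, sq3, Fintype.sum_sum_type, colV, Finset.sum_add_distrib]

theorem fromBlocks_eq_add_smul_vecMulVec (Q : M3) (b : V3) {d : ℝ} (hd : d ≠ 0) :
    fromBlocks (Q + d⁻¹ • outer b b) (colV b) (rowV b) (of fun _ _ => d) =
      fromBlocks Q 0 0 0 +
        d⁻¹ • vecMulVec (Sum.elim b fun _ : Fin 1 => d) (Sum.elim b fun _ : Fin 1 => d) := by
  ext (i | i) (j | j) <;> simp [outer, colV, rowV, vecMulVec_apply] <;> field_simp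

theorem trace_fromBlocks_mul_mul_transpose (E Q : M3) (q b : V3) {d : ℝ} (hd : d ≠ 0) :
    ((fromBlocks E (colV q) 0 0 : M4) * fromBlocks (Q + d⁻¹ • outer b b) (colV b) (rowV b)
      (of fun _ _ => d) * (fromBlocks E (colV q) 0 0 : M4)ᵀ).trace =
      (E * Q * Eᵀ).trace + d⁻¹ * sq3 (E *ᵥ b + d • q) := by
  rw [fromBlocks_eq_add_smul_vecMulVec Q b hd, trace_mul_add_smul_vecMulVec_mul_transpose,
    fromBlocks_transpose, fromBlocks_multiply, fromBlocks_multiply, fromBlocks_mulVec]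
  simp [trace, Fintype.sum_sum_type, sq3, dotProduct, colV, sq, mulVec, mul_comm]

theorem sq3_nonneg (x : V3) : 0 ≤ sq3 x := by unfold sq3; positivity

theorem sq3_add_le (x y : V3) : sq3 (x + y) ≤ 2 * sq3 x + 2 * sq3 y := by
  simp only [sq3, Fin.sum_univ_three, Pi.add_apply]
  nlinarith [sq_nonneg (x 0 - y 0), sq_nonneg (x 1 - y 1), sq_nonneg (x 2 - y 2)]

theorem sq3_le_add (x y : V3) : sq3 y ≤ 2 * sq3 (x + y) + 2 * sq3 x := by
  simp only [sq3, Fin.sum_univ_three, Pi.add_apply]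
  nlinarith [sq_nonneg (2 * x 0 + y 0), sq_nonneg (2 * x 1 + y 1), sq_nonneg (2 * x 2 + y 2)]

theorem sq3_smul (a : ℝ) (x : V3) : sq3 (a • x) = a ^ 2 * sq3 x := by
  simp [sq3, Finset.mul_sum, mul_pow]

theorem sq3_mulVec_le (M : M3) (x : V3) : sq3 (M *ᵥ x) ≤ frob3 M * sq3 x := by
  simp only [sq3, frob3, mulVec, dotProduct]
  rw [Finset.sum_mul]
  exact Finset.sum_le_sum fun i _ => Finset.sum_mul_sq_le_sq_mul_sq _ _ _

theorem min_mul_add_le_half_add {c d β F S T W : ℝ} (hc : 0 ≤ c) (hd : 0 < d) (hβ : 0 ≤ β)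
    (hF : 0 ≤ F) (hW : 0 ≤ W) (hT : c * F ≤ T) (hS : d ^ 2 * S ≤ 2 * W + 2 * (β * F)) :
    min (d / 4) (c * d ^ 2 / (2 * (d ^ 2 + 2 * β))) * (F + S) ≤ 1 / 2 * (T + d⁻¹ * W) := by
  set a := min (d / 4) (c * d ^ 2 / (2 * (d ^ 2 + 2 * β)))
  have ha : 0 ≤ a := le_min (by positivity) (by positivity)
  have ha₁ : a ≤ d / 4 := min_le_left _ _
  have ha₂ : a * (2 * (d ^ 2 + 2 * β)) ≤ c * d ^ 2 :=
    (le_div_iff₀ (by positivity)).mp (min_le_right _ _)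
  have key : 2 * d ^ 2 * (a * (F + S)) ≤ d ^ 2 * T + d * W := by
    nlinarith [mul_le_mul_of_nonneg_left hS ha, mul_le_mul_of_nonneg_right ha₁ hW,
      mul_le_mul_of_nonneg_right ha₂ hF, mul_le_mul_of_nonneg_left hT (sq_nonneg d)]
  rw [show 1 / 2 * (T + d⁻¹ * W) = (d ^ 2 * T + d * W) / (2 * d ^ 2) by field_simp,
    le_div_iff₀ (by positivity)]
  linarith

theorem half_add_le_max_mul_add {c d β F S T W : ℝ} (hd : 0 < d) (hF : 0 ≤ F) (hS : 0 ≤ S)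
    (hT : T ≤ c / 2 * F) (hW : W ≤ 2 * (β * F) + 2 * (d ^ 2 * S)) :
    1 / 2 * (T + d⁻¹ * W) ≤ max (c / 4 + β / d) d * (F + S) := by
  calc 1 / 2 * (T + d⁻¹ * W)
        ≤ 1 / 2 * (c / 2 * F + d⁻¹ * (2 * (β * F) + 2 * (d ^ 2 * S))) := by gcongr
    _ = (c / 4 + β / d) * F + d * S := by field_simp; ring
    _ ≤ max (c / 4 + β / d) d * F + max (c / 4 + β / d) d * S := by
        gcongr
        exacts [le_max_left _ _, le_max_right _ _]
    _ = max (c / 4 + β / d) d * (F + S) := by ring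

theorem stmt9_general (Q : M3) (hpsd : ∀ x : V3, 0 ≤ x ⬝ᵥ Q.mulVec x)
    (hpd : ∀ x : V3, x ≠ 0 →
      0 < x ⬝ᵥ Matrix.mulVec ((1 / 2 : ℝ) • (Q.trace • (1 : M3) - Q)) x)
    (b : V3) (d : ℝ) (hd : 0 < d)
    (A : M4) (hA : A = Matrix.fromBlocks (Q + d⁻¹ • outer b b) (colV b) (rowV b)
      (Matrix.of fun _ _ => d)) :
    ∃ α₁ α₂ : ℝ, 0 < α₁ ∧ 0 < α₂ ∧ ∀ g : M4, inSE3 g →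
      α₁ * frob4 (1 - g) ≤ (1 / 2 : ℝ) * ((1 - g) * A * (1 - g)ᵀ).trace ∧
      (1 / 2 : ℝ) * ((1 - g) * A * (1 - g)ᵀ).trace ≤ α₂ * frob4 (1 - g) := by
  obtain ⟨c, hc, hcP⟩ := exists_pos_mul_dotProduct_self_le _ hpd
  have hβ := sq3_nonneg b
  refine ⟨min (d / 4) (c * d ^ 2 / (2 * (d ^ 2 + 2 * sq3 b))), max (Q.trace / 4 + sq3 b / d) d,
    lt_min (by positivity) (by positivity), lt_max_of_lt_right hd, ?_⟩
  rintro g ⟨R, p, hR, rfl⟩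
  rw [hA, one_sub_SE3mat, trace_fromBlocks_mul_mul_transpose _ _ _ _ hd.ne', frob4_fromBlocks]
  obtain ⟨hrot_low, hrot_up⟩ := hR.trace_conj_one_sub_bounds hpsd hcP
  have hEb := sq3_mulVec_le (1 - R) b
  have hdp := sq3_smul d (-p)
  constructor
  · refine min_mul_add_le_half_add hc.le hd hβ (frob3_nonneg _) (sq3_nonneg _) hrot_low ?_
    linarith [sq3_le_add ((1 - R) *ᵥ b) (d • -p)]
  · refine half_add_le_max_mul_add hd (frob3_nonneg _) (sq3_nonneg _) hrot_up ?_
    linarith [sq3_add_le ((1 - R) *ᵥ b) (d • -p)]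

theorem stmt9 (Q : M3) (hsym : Qᵀ = Q) (hpsd : ∀ x : V3, 0 ≤ x ⬝ᵥ Q.mulVec x)
    (hpd : ∀ x : V3, x ≠ 0 →
      0 < x ⬝ᵥ Matrix.mulVec ((1 / 2 : ℝ) • (Q.trace • (1 : M3) - Q)) x)
    (b : V3) (d : ℝ) (hd : 0 < d)
    (A : M4) (hA : A = Matrix.fromBlocks (Q + d⁻¹ • outer b b) (colV b) (rowV b)
      (Matrix.of fun _ _ => d)) :
    ∃ α₁ α₂ : ℝ, 0 < α₁ ∧ 0 < α₂ ∧ ∀ g : M4, inSE3 g →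
      α₁ * frob4 (1 - g) ≤ (1 / 2 : ℝ) * ((1 - g) * A * (1 - g)ᵀ).trace ∧
      (1 / 2 : ℝ) * ((1 - g) * A * (1 - g)ᵀ).trace ≤ α₂ * frob4 (1 - g) :=
  stmt9_general Q hpsd hpd b d hd A hA
end
end

section
/- Let A be a symmetric 3×3 real matrix, b ∈ ℝ³, d ≠ 0, 𝔸 := [A, b; bᵀ, d], and Q := A − b bᵀ/d. For g = [R, p; 0, 1] ∈ SE(3) set p_e := p − (I₃ − R) b d⁻¹. Then ψ((I₄ − g⁻¹) 𝔸) = (ψ_a(Q R) + ½ b × (Rᵀ p_e), ½ d Rᵀ p_e) ∈ ℝ⁶, and Ad*_{g⁻¹} ψ((I₄ − g⁻¹) 𝔸) = (R ψ_a(Q R) + ½ b × p_e, ½ d p_e) ∈ ℝ⁶. -/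
open Matrix BigOperators

noncomputable section

-- ===== auxiliary lemmas =====

lemma cross_apply' (x y : V3) : cross x y =
    ![x 1 * y 2 - x 2 * y 1, x 2 * y 0 - x 0 * y 2, x 0 * y 1 - x 1 * y 0] := by
  simp [cross, cross_apply]

lemma cross_add_right (x u v : V3) : cross x (u + v) = cross x u + cross x v := by
  funext i; fin_cases i <;> simp [cross_apply'] <;> ring

lemma cross_sub_right (x u v : V3) : cross x (u - v) = cross x u - cross x v := by
  funext i; fin_cases i <;> simp [cross_apply'] <;> ring

lemma cross_smul_right (c : ℝ) (x u : V3) : cross x (c • u) = c • cross x u := by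
  funext i; fin_cases i <;> simp [cross_apply'] <;> ring

lemma cross_self' (x : V3) : cross x x = 0 := by
  funext i; fin_cases i <;> simp [cross_apply'] <;> ring

lemma cross_anticomm'' (x y : V3) : cross x y = - cross y x := by
  funext i; fin_cases i <;> simp [cross_apply'] <;> ring

lemma psia_add (X Y : M3) : psia (X + Y) = psia X + psia Y := by
  funext i; fin_cases i <;> simp [psia] <;> ring

lemma psia_sub (X Y : M3) : psia (X - Y) = psia X - psia Y := by
  funext i; fin_cases i <;> simp [psia] <;> ring

lemma psia_smul (c : ℝ) (X : M3) : psia (c • X) = c • psia X := by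
  funext i; fin_cases i <;> simp [psia] <;> ring

lemma psia_transpose (X : M3) : psia Xᵀ = - psia X := by
  funext i; fin_cases i <;> simp [psia, Matrix.transpose_apply] <;> ring

lemma psia_outer (x y : V3) : psia (outer x y) = (1 / 2 : ℝ) • cross y x := by
  funext i; fin_cases i <;>
    simp [psia, outer, Matrix.vecMulVec_apply, cross_apply'] <;> ring

lemma colV_mul_rowV (x y : V3) : colV x * rowV y = outer x y := by
  ext i j
  simp [colV, rowV, outer, Matrix.mul_apply, Matrix.vecMulVec_apply]

lemma mul_colV (M : M3) (x : V3) : M * colV x = colV (M.mulVec x) := by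
  ext i j
  simp [colV, Matrix.mul_apply, Matrix.mulVec, dotProduct]

lemma colV_mul_scalar (x : V3) (d : ℝ) :
    colV x * (Matrix.of fun _ _ => d : Matrix (Fin 1) (Fin 1) ℝ) = colV (d • x) := by
  ext i j
  simp [colV, Matrix.mul_apply, mul_comm]

lemma outer_mul (x y : V3) (M : M3) : outer x y * M = outer x (Mᵀ.mulVec y) := by
  ext i j
  simp [outer, Matrix.mul_apply, Matrix.vecMulVec_apply, Matrix.mulVec,
    dotProduct, Finset.mul_sum, Finset.sum_mul]
  congr 1; funext k; ring

/-- explicit cofactor matrix of a 3×3 matrix -/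
def cof (M : M3) : M3 :=
  !![M 1 1 * M 2 2 - M 1 2 * M 2 1, M 1 2 * M 2 0 - M 1 0 * M 2 2, M 1 0 * M 2 1 - M 1 1 * M 2 0;
     M 0 2 * M 2 1 - M 0 1 * M 2 2, M 0 0 * M 2 2 - M 0 2 * M 2 0, M 0 1 * M 2 0 - M 0 0 * M 2 1;
     M 0 1 * M 1 2 - M 0 2 * M 1 1, M 0 2 * M 1 0 - M 0 0 * M 1 2, M 0 0 * M 1 1 - M 0 1 * M 1 0]

lemma cross_mulVec (M : M3) (x y : V3) :
    cross (M.mulVec x) (M.mulVec y) = (cof M).mulVec (cross x y) := by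
  funext i; fin_cases i <;>
    simp [cross_apply', cof, Matrix.mulVec, dotProduct, Fin.sum_univ_three] <;> ring

lemma mul_cofT (M : M3) : M * (cof M)ᵀ = M.det • (1 : M3) := by
  ext i j
  simp only [Matrix.mul_apply, Matrix.transpose_apply, Fin.sum_univ_three,
    Matrix.smul_apply, Matrix.one_apply, Matrix.det_fin_three, smul_eq_mul]
  fin_cases i <;> fin_cases j <;> simp [cof] <;> ring

lemma rot_cross (R : M3) (hR : isRot R) (x y : V3) :
    R.mulVec (cross x y) = cross (R.mulVec x) (R.mulVec y) := by
  obtain ⟨hRTR, hdet⟩ := hR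
  have hcof : cof R = R := by
    have h1 : R * (cof R)ᵀ = 1 := by rw [mul_cofT, hdet, one_smul]
    have h2 : (cof R)ᵀ = Rᵀ := by
      calc (cof R)ᵀ = 1 * (cof R)ᵀ := (one_mul _).symm
        _ = (Rᵀ * R) * (cof R)ᵀ := by rw [hRTR]
        _ = Rᵀ * (R * (cof R)ᵀ) := by rw [Matrix.mul_assoc]
        _ = Rᵀ := by rw [h1, mul_one]
    have := congrArg Matrix.transpose h2
    simpa using this
  rw [cross_mulVec, hcof]

lemma ginv (R : M3) (p : V3) (hR : isRot R) :
    (SE3mat R p)⁻¹ = SE3mat Rᵀ (-(Rᵀ.mulVec p)) := by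
  apply Matrix.inv_eq_right_inv
  have hRRT : R * Rᵀ = 1 := mul_eq_one_comm.mp hR.1
  rw [SE3mat, SE3mat, Matrix.fromBlocks_multiply]
  rw [mul_colV]
  have h2 : R.mulVec (-(Rᵀ.mulVec p)) = -p := by
    rw [Matrix.mulVec_neg, Matrix.mulVec_mulVec, hRRT, Matrix.one_mulVec]
  rw [h2]
  have hc : colV (-p) + colV p * (1 : Matrix (Fin 1) (Fin 1) ℝ) = 0 := by
    ext i j; simp [colV, Matrix.mul_apply, Matrix.one_apply]
  rw [hc, hRRT]
  simp [Matrix.fromBlocks_one]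


lemma colV_add (x y : V3) : colV x + colV y = colV (x + y) := by
  ext i j; simp [colV]

lemma cross_add_left (u v y : V3) : cross (u + v) y = cross u y + cross v y := by
  funext i; fin_cases i <;> simp [cross_apply'] <;> ring

lemma cross_sub_left (u v y : V3) : cross (u - v) y = cross u y - cross v y := by
  funext i; fin_cases i <;> simp [cross_apply'] <;> ring

lemma cross_smul_left (c : ℝ) (u y : V3) : cross (c • u) y = c • cross u y := by
  funext i; fin_cases i <;> simp [cross_apply'] <;> ring

lemma cross_neg_left (u y : V3) : cross (-u) y = - cross u y := by
  funext i; fin_cases i <;> simp [cross_apply'] <;> ring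

theorem stmt18 (A : M3) (hsym : Aᵀ = A) (b : V3) (d : ℝ) (hd : d ≠ 0)
    (AA : M4) (hAA : AA = Matrix.fromBlocks A (colV b) (rowV b) (Matrix.of fun _ _ => d))
    (Q : M3) (hQ : Q = A - d⁻¹ • outer b b) :
    ∀ (R : M3) (p : V3), isRot R →
      psi ((1 - (SE3mat R p)⁻¹) * AA)
        = (psia (Q * R) + (1 / 2 : ℝ) • cross b (Rᵀ.mulVec (p - (1 - R).mulVec (d⁻¹ • b))),
           (d / 2 : ℝ) • Rᵀ.mulVec (p - (1 - R).mulVec (d⁻¹ • b))) ∧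
      AdStar (SE3mat R p)⁻¹ (psi ((1 - (SE3mat R p)⁻¹) * AA))
        = (R.mulVec (psia (Q * R)) + (1 / 2 : ℝ) • cross b (p - (1 - R).mulVec (d⁻¹ • b)),
           (d / 2 : ℝ) • (p - (1 - R).mulVec (d⁻¹ • b))) := by
  intro R p hR
  obtain ⟨hRTR, hdet⟩ := hR
  have hRRT : R * Rᵀ = 1 := mul_eq_one_comm.mp hRTR
  set pe : V3 := p - (1 - R).mulVec (d⁻¹ • b) with hpe0
  set e : V3 := Rᵀ.mulVec pe with he0
  -- expansion of e
  have he : e = Rᵀ.mulVec p - d⁻¹ • Rᵀ.mulVec b + d⁻¹ • b := by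
    rw [he0, hpe0, Matrix.sub_mulVec, Matrix.one_mulVec, Matrix.mulVec_smul,
      Matrix.mulVec_sub, Matrix.mulVec_sub, Matrix.mulVec_smul, Matrix.mulVec_smul,
      Matrix.mulVec_mulVec, hRTR, Matrix.one_mulVec]
    abel
  have harg : R.mulVec b - b + d • p = d • pe := by
    rw [hpe0, smul_sub, ← Matrix.mulVec_smul, smul_smul, mul_inv_cancel₀ hd, one_smul,
      Matrix.sub_mulVec, Matrix.one_mulVec]
    abel
  -- the product matrix
  have hM : (1 - (SE3mat R p)⁻¹) * AA
      = Matrix.fromBlocks ((1 - Rᵀ) * A + outer (Rᵀ.mulVec p) b)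
          (colV (b - Rᵀ.mulVec b + d • Rᵀ.mulVec p)) 0 0 := by
    rw [ginv R p ⟨hRTR, hdet⟩, hAA, SE3mat]
    have h1 : (1 : M4) - Matrix.fromBlocks Rᵀ (colV (-(Rᵀ.mulVec p))) 0 1
        = Matrix.fromBlocks (1 - Rᵀ) (colV (Rᵀ.mulVec p)) 0 0 := by
      ext i j
      rcases i with i | i <;> rcases j with j | j <;>
        simp [colV, Matrix.one_apply, Sum.inl.injEq, Sum.inr.injEq]
    rw [h1, Matrix.fromBlocks_multiply, colV_mul_rowV, mul_colV, colV_mul_scalar, colV_add]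
    have hbr : (1 - Rᵀ).mulVec b + (d • Rᵀ.mulVec p) = b - Rᵀ.mulVec b + d • Rᵀ.mulVec p := by
      rw [Matrix.sub_mulVec, Matrix.one_mulVec]
    rw [hbr]
    congr 1 <;> simp
  -- symmetric matrix facts
  have hpsiaA : psia A = 0 := by
    have hs : ∀ i j, A j i = A i j := by
      intro i j
      have := congrFun (congrFun hsym i) j
      simpa [Matrix.transpose_apply] using this
    funext i; fin_cases i <;> simp [psia, hs]
  have hpsiaRA : psia (Rᵀ * A) = - psia (A * R) := by
    have : (Rᵀ * A)ᵀ = A * R := by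
      rw [Matrix.transpose_mul, Matrix.transpose_transpose, hsym]
    rw [← this, psia_transpose, neg_neg]
  -- psia of Q * R
  have hQR : psia (Q * R) = psia (A * R) + (d⁻¹ / 2) • cross b (Rᵀ.mulVec b) := by
    rw [hQ, sub_mul, smul_mul_assoc, outer_mul, psia_sub, psia_smul, psia_outer,
      cross_anticomm'' (Rᵀ.mulVec b) b]
    module
  -- first (psia) component of part one
  have hcomp1 : psia ((1 - Rᵀ) * A + outer (Rᵀ.mulVec p) b)
      = psia (Q * R) + (1 / 2 : ℝ) • cross b e := by
    rw [psia_add, psia_outer, sub_mul, one_mul, psia_sub, hpsiaA, hpsiaRA, hQR, he,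
      cross_add_right, cross_sub_right, cross_smul_right, cross_smul_right, cross_self']
    module
  -- second component of part one
  have hcomp2 : (fun i => (b - Rᵀ.mulVec b + d • Rᵀ.mulVec p) i / 2) = (d / 2 : ℝ) • e := by
    funext i
    rw [he]
    simp only [Pi.add_apply, Pi.sub_apply, Pi.smul_apply, smul_eq_mul]
    field_simp
    ring
  have part1 : psi ((1 - (SE3mat R p)⁻¹) * AA)
      = (psia (Q * R) + (1 / 2 : ℝ) • cross b e, (d / 2 : ℝ) • e) := by
    rw [hM]
    unfold psi
    refine Prod.ext ?_ ?_
    · rw [Matrix.toBlocks_fromBlocks₁₁]; exact hcomp1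
    · show (fun i => Matrix.fromBlocks _ _ _ _ (Sum.inl i) (Sum.inr 0) / 2) = _
      simp only [Matrix.fromBlocks_apply₁₂, colV, Matrix.of_apply]
      exact hcomp2
  refine ⟨part1, ?_⟩
  -- part two
  rw [part1, ginv R p ⟨hRTR, hdet⟩]
  have htb : (SE3mat Rᵀ (-(Rᵀ.mulVec p))).toBlocks₁₁ = Rᵀ := by
    rw [SE3mat, Matrix.toBlocks_fromBlocks₁₁]
  have htr : (fun i => (SE3mat Rᵀ (-(Rᵀ.mulVec p))) (Sum.inl i) (Sum.inr 0)) = -(Rᵀ.mulVec p) := by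
    funext i; simp [SE3mat, colV, Matrix.fromBlocks_apply₁₂]
  unfold AdStar
  rw [htb, htr, Matrix.transpose_transpose]
  have hRe : R.mulVec e = pe := by
    rw [he0, Matrix.mulVec_mulVec, hRRT, Matrix.one_mulVec]
  have hRcross : ∀ x y : V3, R.mulVec (cross x y) = cross (R.mulVec x) (R.mulVec y) :=
    rot_cross R ⟨hRTR, hdet⟩
  have h2comp : R.mulVec ((d / 2 : ℝ) • e) = (d / 2 : ℝ) • pe := by
    rw [Matrix.mulVec_smul, hRe]
  have hccomb : cross (R.mulVec b) pe + d • cross p pe = cross b pe := by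
    have h2 : cross (R.mulVec b) pe - cross b pe + d • cross p pe = 0 := by
      calc cross (R.mulVec b) pe - cross b pe + d • cross p pe
          = cross (R.mulVec b - b + d • p) pe := by
            rw [cross_add_left, cross_sub_left, cross_smul_left]
        _ = cross (d • pe) pe := by rw [harg]
        _ = 0 := by rw [cross_smul_left, cross_self', smul_zero]
    have h3 : cross (R.mulVec b) pe - cross b pe + d • cross p pe
        = cross b pe - cross b pe := by rw [h2, sub_self]
    have := sub_eq_zero.mpr (rfl : cross b pe = cross b pe)
    calc cross (R.mulVec b) pe + d • cross p pe
        = cross (R.mulVec b) pe - cross b pe + d • cross p pe + cross b pe := by abel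
      _ = 0 + cross b pe := by rw [h2]
      _ = cross b pe := by rw [zero_add]
  have h1comp : R.mulVec (psia (Q * R) + (1 / 2 : ℝ) • cross b e
        - cross (-(Rᵀ.mulVec p)) ((d / 2 : ℝ) • e))
      = R.mulVec (psia (Q * R)) + (1 / 2 : ℝ) • cross b pe := by
    rw [cross_neg_left, cross_smul_right, sub_neg_eq_add, Matrix.mulVec_add,
      Matrix.mulVec_add, Matrix.mulVec_smul, Matrix.mulVec_smul, hRcross, hRcross, hRe,
      Matrix.mulVec_mulVec, hRRT, Matrix.one_mulVec]
    have : (d / 2 : ℝ) • cross p pe = (1 / 2 : ℝ) • (d • cross p pe) := by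
      rw [smul_smul, show (1 / 2 : ℝ) * d = d / 2 by ring]
    rw [this, add_assoc, ← smul_add, hccomb]
  rw [Prod.mk.injEq]
  exact ⟨h1comp, h2comp⟩
end
end
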